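/- Suppose κ satisfies Assumption 1. Fix j₀ ∈ {k, …, N}. Let x̂^(0), x̂^(1), x̂^(2), … be estimate tuples in S^(N−k+1) and f^(1), f^(2), … randomized policies with f^(i) ∈ 𝔓(x̂^(i−1)) for every i ≥ 1, and suppose there is ε > 0 such that for every i ≥ 1 and every j ∈ {k, …, j₀} the quantity q_j^(i) associated with f^(i) is well-defined and satisfies q_j^(i) ≥ ε. Then for every j ∈ {k, …, j₀}, the set {x̂_j^(i) : i ≥ 0} is a d-bounded subset of S. -/

import Mathlib

open MeasureTheory Filter
open scoped ENNReal NNReal Topology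

noncomputable section

/-- The state space `S = ℝ² × [0, 2π)`. -/
abbrev S : Type := {x : ℝ × ℝ × ℝ // x.2.2 ∈ Set.Ico (0 : ℝ) (2 * Real.pi)}

/-- The metric `d` on `S`. -/
noncomputable def dS (x y : S) : ℝ :=
  Real.sqrt ((x.1.1 - y.1.1) ^ 2 + (x.1.2.1 - y.1.2.1) ^ 2
    + 2 * (Real.cos x.1.2.2 - Real.cos y.1.2.2) ^ 2
    + 2 * (Real.sin x.1.2.2 - Real.sin y.1.2.2) ^ 2)

/-- The initial state `x₀ = (0,0,0)`. -/
def origin : S := ⟨(0, 0, 0), ⟨le_rfl, by positivity⟩⟩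

/-- `κ` is a Markov kernel on `S`. -/
def IsMarkov (κ : S → Measure S) : Prop :=
  (∀ x, IsProbabilityMeasure (κ x)) ∧
    ∀ A : Set S, MeasurableSet A → Measurable fun x => κ x A

/-- Continuity of a real-valued function with respect to the metric `dS`. -/
def DContinuous (g : S → ℝ) : Prop :=
  ∀ x : S, ∀ ε : ℝ, 0 < ε → ∃ δ : ℝ, 0 < δ ∧ ∀ y : S, dS x y < δ → |g y - g x| < ε

/-- Openness with respect to the metric `dS`. -/
def DOpen (O : Set S) : Prop :=
  ∀ x ∈ O, ∃ δ : ℝ, 0 < δ ∧ ∀ y : S, dS x y < δ → y ∈ O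

/-- Assumption 1 on the kernel `κ`. -/
def Assumption1 (κ : S → Measure S) : Prop :=
  (∀ A : Set S, MeasurableSet A → DContinuous fun x => (κ x A).toReal) ∧
    ∀ O : Set S, DOpen O → O.Nonempty → ∀ x : S, 0 < κ x O

/-- Auxiliary downward value recursion; the first argument is the number
`N + 1 - j` of remaining stages. -/
noncomputable def Jaux (κ : S → Measure S) (c' : ℕ → ℝ) (xhat : ℕ → S) :
    ℕ → ℕ → S → ℝ≥0∞
  | 0, _, _ => 0
  | m + 1, j, x =>
      min (ENNReal.ofReal (dS x (xhat j) ^ 2) + ∫⁻ y, Jaux κ c' xhat m (j + 1) y ∂(κ x))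
        (ENNReal.ofReal (c' j))

/-- The optimal cost-to-go `J*_j(x, x̂_{j:N})`. -/
noncomputable def JJ (κ : S → Measure S) (c' : ℕ → ℝ) (N : ℕ) (xhat : ℕ → S)
    (j : ℕ) (x : S) : ℝ≥0∞ :=
  Jaux κ c' xhat (N + 1 - j) j x

/-- `G_j(x, x̂_{j:N}) = ∫ J*_j(y, x̂_{j:N}) κ(x)(dy)`. -/
noncomputable def Gj (κ : S → Measure S) (c' : ℕ → ℝ) (N : ℕ) (xhat : ℕ → S)
    (j : ℕ) (x : S) : ℝ≥0∞ :=
  ∫⁻ y, JJ κ c' N xhat j y ∂(κ x)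

/-- `G(x̂_{k:N}) = G_k(x₀, x̂_{k:N})`. -/
noncomputable def Gtot (κ : S → Measure S) (c' : ℕ → ℝ) (k N : ℕ) (xhat : ℕ → S) : ℝ≥0∞ :=
  Gj κ c' N xhat k origin

/-- A randomized policy: a tuple of Borel measurable functions `f_j : S → [0,1]`. -/
def IsPolicy (k N : ℕ) (f : ℕ → S → ℝ≥0∞) : Prop :=
  ∀ j, k ≤ j → j ≤ N → Measurable (f j) ∧ ∀ x, f j x ≤ 1

/-- Auxiliary cost-to-go recursion for a policy; first argument is `N + 1 - j`. -/
noncomputable def Vaux (κ : S → Measure S) (c' : ℕ → ℝ) (xhat : ℕ → S)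
    (f : ℕ → S → ℝ≥0∞) : ℕ → ℕ → S → ℝ≥0∞
  | 0, _, _ => 0
  | m + 1, j, x =>
      f j x * (ENNReal.ofReal (dS x (xhat j) ^ 2) + ∫⁻ y, Vaux κ c' xhat f m (j + 1) y ∂(κ x))
        + (1 - f j x) * ENNReal.ofReal (c' j)

/-- The cost-to-go `V_j` of a policy `f` with estimates `x̂`. -/
noncomputable def VV (κ : S → Measure S) (c' : ℕ → ℝ) (N : ℕ) (xhat : ℕ → S)
    (f : ℕ → S → ℝ≥0∞) (j : ℕ) (x : S) : ℝ≥0∞ :=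
  Vaux κ c' xhat f (N + 1 - j) j x

/-- The total expected cost `C(f_{k:N}, x̂_{k:N})`. -/
noncomputable def Cost (κ : S → Measure S) (c' : ℕ → ℝ) (k N : ℕ) (xhat : ℕ → S)
    (f : ℕ → S → ℝ≥0∞) : ℝ≥0∞ :=
  ∫⁻ y, VV κ c' N xhat f k y ∂(κ origin)

/-- `f ∈ 𝔓(x̂_{k:N})`: `f` minimizes the cost over all randomized policies. -/
def inP (κ : S → Measure S) (c' : ℕ → ℝ) (k N : ℕ) (xhat : ℕ → S)
    (f : ℕ → S → ℝ≥0∞) : Prop :=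
  IsPolicy k N f ∧
    ∀ g : ℕ → S → ℝ≥0∞, IsPolicy k N g → Cost κ c' k N xhat f ≤ Cost κ c' k N xhat g

/-- `x̂ ∈ 𝔛(f_{k:N})`: the estimates minimize the cost for the policy `f`. -/
def inX (κ : S → Measure S) (c' : ℕ → ℝ) (k N : ℕ) (f : ℕ → S → ℝ≥0∞)
    (xhat : ℕ → S) : Prop :=
  ∀ yhat : ℕ → S, Cost κ c' k N xhat f ≤ Cost κ c' k N yhat f

/-- Conditioning a measure on "no transmission" at stage `j`. -/
noncomputable def condMeas (f : ℕ → S → ℝ≥0∞) (j : ℕ) (μ : Measure S) : Measure S :=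
  (∫⁻ x, f j x ∂μ)⁻¹ • μ.withDensity (f j)

/-- The predicted measures `μ_{j|j−1}`, by recursion on `j - k`. -/
noncomputable def mupredAux (κ : S → Measure S) (f : ℕ → S → ℝ≥0∞) (k : ℕ) :
    ℕ → Measure S
  | 0 => κ origin
  | n + 1 => (condMeas f (k + n) (mupredAux κ f k n)).bind κ

/-- `μ_{j|j−1}`. -/
noncomputable def mupred (κ : S → Measure S) (f : ℕ → S → ℝ≥0∞) (k j : ℕ) : Measure S :=
  mupredAux κ f k (j - k)

/-- `q_j = ∫ f_j dμ_{j|j−1}`. -/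
noncomputable def qq (κ : S → Measure S) (f : ℕ → S → ℝ≥0∞) (k j : ℕ) : ℝ≥0∞ :=
  ∫⁻ x, f j x ∂(mupred κ f k j)

/-- `μ_{j|j}`. -/
noncomputable def mucond (κ : S → Measure S) (f : ℕ → S → ℝ≥0∞) (k j : ℕ) : Measure S :=
  condMeas f j (mupred κ f k j)

/-- Non-degeneracy of a policy. -/
def NonDeg (κ : S → Measure S) (f : ℕ → S → ℝ≥0∞) (k N : ℕ) : Prop :=
  ∀ j, k ≤ j → j ≤ N → 0 < qq κ f k j

/-- The closed "no transmission" region `D̄_j`. -/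
noncomputable def Dbar (κ : S → Measure S) (c' : ℕ → ℝ) (N : ℕ) (xhat : ℕ → S)
    (j : ℕ) : Set S :=
  {x : S | ENNReal.ofReal (dS x (xhat j) ^ 2) + ∫⁻ y, JJ κ c' N xhat (j + 1) y ∂(κ x)
      ≤ ENNReal.ofReal (c' j)}

/-- The open "no transmission" region `Ḏ_j`. -/
noncomputable def Dund (κ : S → Measure S) (c' : ℕ → ℝ) (N : ℕ) (xhat : ℕ → S)
    (j : ℕ) : Set S :=
  {x : S | ENNReal.ofReal (dS x (xhat j) ^ 2) + ∫⁻ y, JJ κ c' N xhat (j + 1) y ∂(κ x)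
      < ENNReal.ofReal (c' j)}

/-- Hypothesis (H). -/
def HypH (κ : S → Measure S) (c' : ℕ → ℝ) (k N : ℕ) : Prop :=
  ∀ j, k ≤ j → j ≤ N → ∃ xhat : ℕ → S, (Dund κ c' N xhat j).Nonempty

/-- Weak convergence of measures on `(S, dS)`: tested against `dS`-continuous
bounded functions. -/
def WeakConvS (μl : ℕ → Measure S) (μ : Measure S) : Prop :=
  ∀ h : S → ℝ, DContinuous h → (∃ C : ℝ, ∀ x, |h x| ≤ C) →
    Tendsto (fun l => ∫ x, h x ∂(μl l)) atTop (𝓝 (∫ x, h x ∂μ))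

/-- Convergence of a sequence of (non-degenerate) policies to a policy. -/
def PolConv (κ : S → Measure S) (k N : ℕ) (g : ℕ → ℕ → S → ℝ≥0∞)
    (f : ℕ → S → ℝ≥0∞) : Prop :=
  ∀ j, k ≤ j → j ≤ N →
    WeakConvS (fun l => mucond κ (g l) k j) (mucond κ f k j) ∧
      Tendsto (fun l => qq κ (g l) k j) atTop (𝓝 (qq κ f k j))

/-!
Comparing with the policy that always transmits, an optimal policy costs at most `c'_k`.
The cost-to-go at stage `j` dominates `f_j(x) d(x, x̂_j)²`, and each conditioning step loses at
most the factor `q_l ≥ ε`, so `ε^(j-k) ∫ f_j(x) d(x, x̂_j)² dμ_{j|j-1} ≤ c'_k`. The same factors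
give `ε^(j-k) μ_{j|j-1} ≤ κ^(j-k+1)(x₀)`, the law of the uncontrolled chain, which does not depend
on `i`: hence `f_j` keeps mass `ε/2` under `μ_{j|j-1}` on one fixed ball `{d(·, x₀) ≤ M}`, where
`d(x, x̂_j) ≥ d(x₀, x̂_j) - M`. This bounds `d(x₀, x̂_j)` uniformly in `i`.
-/

lemma exists_measure_setOf_lt_lt {α : Type*} [MeasurableSpace α] (μ : Measure α)
    [IsFiniteMeasure μ] {g : α → ℝ} (hg : Measurable g) {δ : ℝ≥0∞} (hδ : 0 < δ) :
    ∃ M : ℝ, μ {x | M < g x} < δ := by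
  have hanti : Antitone fun M : ℝ => g ⁻¹' Set.Ioi M :=
    fun a b hab x hx => lt_of_le_of_lt hab hx
  have hempty : ⋂ M : ℝ, g ⁻¹' Set.Ioi M = ∅ :=
    Set.eq_empty_of_forall_notMem fun x hx => lt_irrefl (g x) (Set.mem_iInter.1 hx (g x))
  have htend := tendsto_measure_iInter_atTop (μ := μ)
    (fun M => (hg measurableSet_Ioi).nullMeasurableSet) hanti ⟨0, measure_ne_top μ _⟩
  rw [hempty, measure_empty] at htend
  exact (htend.eventually_lt_const hδ).exists

lemma mul_half_le_lintegral_mul {α : Type*} [MeasurableSpace α] {μ : Measure α}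
    {f g : α → ℝ≥0∞} {B : Set α} {ε r : ℝ≥0∞} (hB : MeasurableSet B) (hf : ∀ x, f x ≤ 1)
    (hε : ε ≤ ∫⁻ x, f x ∂μ) (hεt : ε ≠ ⊤) (hBc : μ Bᶜ ≤ ε / 2) (hr : ∀ x ∈ B, r ≤ g x) :
    r * (ε / 2) ≤ ∫⁻ x, f x * g x ∂μ := by
  have hBc' : ∫⁻ x in Bᶜ, f x ∂μ ≤ ε / 2 :=
    (setLIntegral_mono' hB.compl fun x _ => hf x).trans (by simpa using hBc)
  have hmass : ε / 2 ≤ ∫⁻ x in B, f x ∂μ := by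
    refine (ENNReal.add_le_add_iff_right (ENNReal.div_ne_top hεt two_ne_zero)).1 ?_
    calc ε / 2 + ε / 2 = ε := ENNReal.add_halves ε
      _ ≤ ∫⁻ x in B, f x ∂μ + ∫⁻ x in Bᶜ, f x ∂μ := hε.trans_eq (lintegral_add_compl f hB).symm
      _ ≤ ∫⁻ x in B, f x ∂μ + ε / 2 := by gcongr
  calc r * (ε / 2) ≤ r * ∫⁻ x in B, f x ∂μ := by gcongr
    _ ≤ ∫⁻ x in B, r * f x ∂μ := lintegral_const_mul_le r f
    _ ≤ ∫⁻ x in B, f x * g x ∂μ := setLIntegral_mono' hB fun x hx => by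
        rw [mul_comm]; gcongr; exact hr x hx
    _ ≤ ∫⁻ x, f x * g x ∂μ := setLIntegral_le_lintegral B _

lemma le_sqrt_of_ofReal_sq_mul_le {a : ℝ} {δ C : ℝ≥0∞} (hδ : δ ≠ 0) (hC : C ≠ ⊤)
    (h : ENNReal.ofReal a ^ 2 * δ ≤ C) : a ≤ √(C / δ).toReal := by
  have hK : C / δ ≠ ⊤ := ENNReal.div_ne_top hC hδ
  have h' : ENNReal.ofReal a ^ 2 ≤ C / δ := (ENNReal.le_div_iff_mul_le (.inl hδ) (.inr hC)).2 h
  have hsq : (ENNReal.ofReal a).toReal ^ 2 ≤ (C / δ).toReal := by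
    rw [← ENNReal.toReal_pow]; exact ENNReal.toReal_mono hK h'
  calc a ≤ max a 0 := le_max_left a 0
    _ = (ENNReal.ofReal a).toReal := (ENNReal.toReal_ofReal').symm
    _ ≤ √(C / δ).toReal := Real.le_sqrt_of_sq_le hsq

def embedS (x : S) : EuclideanSpace ℝ (Fin 4) :=
  WithLp.toLp 2 ![x.1.1, x.1.2.1, √2 * Real.cos x.1.2.2, √2 * Real.sin x.1.2.2]

lemma dS_eq_dist (x y : S) : dS x y = dist (embedS x) (embedS y) := by
  rw [EuclideanSpace.dist_eq, dS, Fin.sum_univ_four]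
  simp only [embedS, PiLp.toLp_apply, Real.dist_eq, Matrix.cons_val_zero, Matrix.cons_val_one,
    Matrix.cons_val_two, Matrix.cons_val_three, Matrix.head_cons, Matrix.tail_cons, sq_abs]
  have h2 : √2 ^ 2 = 2 := Real.sq_sqrt zero_le_two
  congr 1
  linear_combination -((Real.cos x.1.2.2 - Real.cos y.1.2.2) ^ 2
    + (Real.sin x.1.2.2 - Real.sin y.1.2.2) ^ 2) * h2

lemma measurable_embedS : Measurable embedS := by
  have : Continuous embedS := (PiLp.continuous_toLp 2 _).comp (by fun_prop)
  exact this.measurable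

lemma measurable_dS (c : S) : Measurable fun x => dS x c := by
  simp only [dS_eq_dist]
  exact measurable_embedS.dist measurable_const

lemma sub_le_dS_of_dS_le {x y z : S} {M : ℝ} (h : dS x z ≤ M) : dS z y - M ≤ dS x y := by
  have := dist_triangle_left (embedS z) (embedS y) (embedS x)
  simp only [← dS_eq_dist] at this
  linarith

lemma IsMarkov.measurable {κ : S → Measure S} (hκ : IsMarkov κ) : Measurable κ :=
  Measure.measurable_of_measurable_coe κ hκ.2

lemma IsMarkov.measurable_lintegral {κ : S → Measure S} (hκ : IsMarkov κ) {g : S → ℝ≥0∞}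
    (hg : Measurable g) : Measurable fun x => ∫⁻ y, g y ∂(κ x) :=
  (Measure.measurable_lintegral hg).comp hκ.measurable

lemma IsMarkov.isProbabilityMeasure_bind {κ : S → Measure S} (hκ : IsMarkov κ) (μ : Measure S)
    [IsProbabilityMeasure μ] : IsProbabilityMeasure (μ.bind κ) := by
  constructor
  rw [Measure.bind_apply MeasurableSet.univ hκ.measurable.aemeasurable]
  simp [fun x => (hκ.1 x).measure_univ]

section CostToGo

variable {κ : S → Measure S} {c' : ℕ → ℝ} {k N : ℕ} {xh : ℕ → S} {f : ℕ → S → ℝ≥0∞}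

lemma VV_eq {j : ℕ} (hjN : j ≤ N) (x : S) :
    VV κ c' N xh f j x = f j x * (ENNReal.ofReal (dS x (xh j) ^ 2)
      + ∫⁻ y, VV κ c' N xh f (j + 1) y ∂(κ x)) + (1 - f j x) * ENNReal.ofReal (c' j) := by
  simp only [VV, show N + 1 - j = N - j + 1 by omega, show N + 1 - (j + 1) = N - j by omega]
  rfl

lemma mul_dS_sq_le_VV {j : ℕ} (hjN : j ≤ N) (x : S) :
    f j x * ENNReal.ofReal (dS x (xh j) ^ 2) ≤ VV κ c' N xh f j x := by
  rw [VV_eq hjN]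
  exact (mul_le_mul_right le_self_add _).trans le_self_add

lemma mul_lintegral_VV_succ_le_VV {j : ℕ} (hjN : j ≤ N) (x : S) :
    f j x * ∫⁻ y, VV κ c' N xh f (j + 1) y ∂(κ x) ≤ VV κ c' N xh f j x := by
  rw [VV_eq hjN]
  exact (mul_le_mul_right le_add_self _).trans le_self_add

lemma measurable_VV (hκ : IsMarkov κ) (hf : IsPolicy k N f) {j : ℕ} (hkj : k ≤ j)
    (hjN : j ≤ N + 1) : Measurable (VV κ c' N xh f j) := by
  induction hjN using Nat.decreasingInduction with
  | self => unfold VV; rw [Nat.sub_self]; exact measurable_const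
  | of_succ j hjN ih =>
    have hfj := (hf j hkj (Nat.lt_succ_iff.1 hjN)).1
    have hd : Measurable fun x => ENNReal.ofReal (dS x (xh j) ^ 2) :=
      ENNReal.measurable_ofReal.comp ((measurable_dS _).pow_const 2)
    simp only [funext (VV_eq (Nat.lt_succ_iff.1 hjN))]
    exact (hfj.mul (hd.add (hκ.measurable_lintegral (ih (hkj.trans j.le_succ))))).add
      ((measurable_const.sub hfj).mul measurable_const)

lemma cost_le_of_inP (hκ : IsMarkov κ) (hkN : k ≤ N) (hP : inP κ c' k N xh f) :
    Cost κ c' k N xh f ≤ ENNReal.ofReal (c' k) := by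
  -- the policy that always transmits costs exactly `c'_k`
  have hzero : IsPolicy k N fun _ _ => 0 := fun _ _ _ => ⟨measurable_const, fun _ => zero_le_one⟩
  refine (hP.2 _ hzero).trans_eq ?_
  have := hκ.1 origin
  simp [Cost, VV_eq hkN]

end CostToGo

-- The law `κ^(n+1)(x₀)` of the uncontrolled chain.
def kernelIter (κ : S → Measure S) : ℕ → Measure S
  | 0 => κ origin
  | n + 1 => (kernelIter κ n).bind κ

lemma isProbabilityMeasure_kernelIter {κ : S → Measure S} (hκ : IsMarkov κ) :
    ∀ n, IsProbabilityMeasure (kernelIter κ n)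
  | 0 => hκ.1 origin
  | n + 1 =>
    have := isProbabilityMeasure_kernelIter hκ n
    hκ.isProbabilityMeasure_bind _

lemma isProbabilityMeasure_condMeas {f : ℕ → S → ℝ≥0∞} {j : ℕ} {μ : Measure S}
    (h0 : ∫⁻ x, f j x ∂μ ≠ 0) (htop : ∫⁻ x, f j x ∂μ ≠ ⊤) :
    IsProbabilityMeasure (condMeas f j μ) := by
  constructor
  rw [condMeas, Measure.smul_apply, withDensity_apply _ MeasurableSet.univ,
    Measure.restrict_univ, smul_eq_mul, ENNReal.inv_mul_cancel h0 htop]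

section Prediction

variable {κ : S → Measure S} {f : ℕ → S → ℝ≥0∞} {k N : ℕ}

lemma mupred_self : mupred κ f k k = κ origin := by
  rw [mupred, Nat.sub_self]
  rfl

lemma mupred_succ {j : ℕ} (hkj : k ≤ j) : mupred κ f k (j + 1) = (mucond κ f k j).bind κ := by
  rw [mupred, show j + 1 - k = j - k + 1 by omega]
  show (condMeas f (k + (j - k)) (mupredAux κ f k (j - k))).bind κ = _
  rw [Nat.add_sub_cancel' hkj]
  rfl

lemma qq_le_one {j : ℕ} [IsProbabilityMeasure (mupred κ f k j)] (hf : ∀ x, f j x ≤ 1) :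
    qq κ f k j ≤ 1 :=
  (lintegral_mono hf).trans_eq (by simp)

lemma qq_mul_lintegral_mupred_succ (hκ : IsMarkov κ) {j : ℕ} (hkj : k ≤ j)
    (hfj : Measurable (f j)) (h0 : qq κ f k j ≠ 0) (htop : qq κ f k j ≠ ⊤) {g : S → ℝ≥0∞}
    (hg : Measurable g) :
    qq κ f k j * ∫⁻ y, g y ∂(mupred κ f k (j + 1))
      = ∫⁻ x, f j x * ∫⁻ y, g y ∂(κ x) ∂(mupred κ f k j) := by
  rw [mupred_succ hkj, Measure.lintegral_bind hκ.measurable.aemeasurable hg.aemeasurable, mucond,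
    condMeas, lintegral_smul_measure,
    lintegral_withDensity_eq_lintegral_mul _ hfj (hκ.measurable_lintegral hg), smul_eq_mul,
    ← mul_assoc, ← qq, ENNReal.mul_inv_cancel h0 htop, one_mul]
  rfl

lemma isProbabilityMeasure_mupred (hκ : IsMarkov κ) (hf : IsPolicy k N f) {j : ℕ}
    (hq : ∀ l, k ≤ l → l < j → qq κ f k l ≠ 0) (hkj : k ≤ j) (hjN : j ≤ N + 1) :
    IsProbabilityMeasure (mupred κ f k j) := by
  induction j, hkj using Nat.le_induction with
  | base => rw [mupred_self]; exact hκ.1 origin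
  | succ j hkj ih =>
    have := ih (fun l hkl hlj => hq l hkl (hlj.trans j.lt_succ_self)) (by omega)
    have hqt : qq κ f k j ≠ ⊤ :=
      ((qq_le_one (hf j hkj (by omega)).2).trans_lt ENNReal.one_lt_top).ne
    have := isProbabilityMeasure_condMeas (hq j hkj j.lt_succ_self) hqt
    rw [mupred_succ hkj, mucond]
    exact hκ.isProbabilityMeasure_bind _

end Prediction

section Domination

variable {κ : S → Measure S} {f : ℕ → S → ℝ≥0∞} {k N : ℕ} {ε : ℝ≥0∞}

lemma qq_ne_top (hκ : IsMarkov κ) (hf : IsPolicy k N f) (hε : ε ≠ 0) {j : ℕ}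
    (hq : ∀ l, k ≤ l → l < j → ε ≤ qq κ f k l) (hkj : k ≤ j) (hjN : j ≤ N) :
    qq κ f k j ≠ ⊤ := by
  have := isProbabilityMeasure_mupred hκ hf
    (fun l hkl hlj => (hε.bot_lt.trans_le (hq l hkl hlj)).ne') hkj (by omega)
  exact ((qq_le_one (hf j hkj hjN).2).trans_lt ENNReal.one_lt_top).ne

lemma pow_smul_mupred_le_kernelIter (hκ : IsMarkov κ) (hf : IsPolicy k N f) (hε : ε ≠ 0)
    {j : ℕ} (hq : ∀ l, k ≤ l → l < j → ε ≤ qq κ f k l) (hkj : k ≤ j) (hjN : j ≤ N + 1) :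
    ε ^ (j - k) • mupred κ f k j ≤ kernelIter κ (j - k) := by
  induction j, hkj using Nat.le_induction with
  | base => rw [Nat.sub_self, pow_zero, one_smul, mupred_self]; rfl
  | succ j hkj ih =>
    have hq' : ∀ l, k ≤ l → l < j → ε ≤ qq κ f k l :=
      fun l hkl hlj => hq l hkl (hlj.trans j.lt_succ_self)
    have hqj := hq j hkj j.lt_succ_self
    have hfj := hf j hkj (by omega)
    have hqt := qq_ne_top hκ hf hε hq' hkj (by omega)
    rw [Measure.le_iff]
    intro A hA
    rw [Measure.smul_apply, smul_eq_mul, show j + 1 - k = j - k + 1 by omega, kernelIter,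
      Measure.bind_apply hA hκ.measurable.aemeasurable]
    calc ε ^ (j - k + 1) * mupred κ f k (j + 1) A
        ≤ ε ^ (j - k) * (qq κ f k j * mupred κ f k (j + 1) A) := by
          rw [pow_succ, mul_assoc]; gcongr
      _ = ε ^ (j - k) * ∫⁻ x, f j x * κ x A ∂(mupred κ f k j) := by
          rw [← lintegral_indicator_one hA, qq_mul_lintegral_mupred_succ hκ hkj hfj.1
            (hε.bot_lt.trans_le hqj).ne' hqt (measurable_one.indicator hA)]
          simp only [lintegral_indicator_one hA]
      _ ≤ ε ^ (j - k) * ∫⁻ x, κ x A ∂(mupred κ f k j) := by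
          gcongr with x; exact mul_le_of_le_one_left' (hfj.2 x)
      _ = ∫⁻ x, κ x A ∂(ε ^ (j - k) • mupred κ f k j) := by rw [lintegral_smul_measure, smul_eq_mul]
      _ ≤ ∫⁻ x, κ x A ∂(kernelIter κ (j - k)) := lintegral_mono' (ih hq' (by omega)) le_rfl

lemma pow_mul_lintegral_VV_le_cost (hκ : IsMarkov κ) {c' : ℕ → ℝ} {xh : ℕ → S}
    (hf : IsPolicy k N f) (hε : ε ≠ 0) {j : ℕ} (hq : ∀ l, k ≤ l → l < j → ε ≤ qq κ f k l)
    (hkj : k ≤ j) (hjN : j ≤ N) :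
    ε ^ (j - k) * ∫⁻ x, VV κ c' N xh f j x ∂(mupred κ f k j) ≤ Cost κ c' k N xh f := by
  induction j, hkj using Nat.le_induction with
  | base => rw [Nat.sub_self, pow_zero, one_mul, mupred_self, Cost]
  | succ j hkj ih =>
    have hq' : ∀ l, k ≤ l → l < j → ε ≤ qq κ f k l :=
      fun l hkl hlj => hq l hkl (hlj.trans j.lt_succ_self)
    have hqj := hq j hkj j.lt_succ_self
    have hqt := qq_ne_top hκ hf hε hq' hkj (by omega)
    have hV := measurable_VV (c' := c') (xh := xh) hκ hf (hkj.trans j.le_succ) (by omega)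
    calc ε ^ (j + 1 - k) * ∫⁻ x, VV κ c' N xh f (j + 1) x ∂(mupred κ f k (j + 1))
        ≤ ε ^ (j - k) * (qq κ f k j * ∫⁻ x, VV κ c' N xh f (j + 1) x ∂(mupred κ f k (j + 1))) := by
          rw [show j + 1 - k = j - k + 1 by omega, pow_succ, mul_assoc]; gcongr
      _ = ε ^ (j - k) * ∫⁻ x, f j x * ∫⁻ y, VV κ c' N xh f (j + 1) y ∂(κ x) ∂(mupred κ f k j) := by
          rw [qq_mul_lintegral_mupred_succ hκ hkj (hf j hkj (by omega)).1
            (hε.bot_lt.trans_le hqj).ne' hqt hV]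
      _ ≤ ε ^ (j - k) * ∫⁻ x, VV κ c' N xh f j x ∂(mupred κ f k j) := by
          gcongr with x; exact mul_lintegral_VV_succ_le_VV (by omega) x
      _ ≤ Cost κ c' k N xh f := ih hq' (by omega)

end Domination

lemma ofReal_dS_sub_sq_mul_le {κ : S → Measure S} (hκ : IsMarkov κ) {c' : ℕ → ℝ} {k N j : ℕ}
    {xh : ℕ → S} {f : ℕ → S → ℝ≥0∞} (hP : inP κ c' k N xh f) {ε : ℝ≥0∞} (hε : ε ≠ 0)
    (hq : ∀ l, k ≤ l → l ≤ j → ε ≤ qq κ f k l) (hkj : k ≤ j) (hjN : j ≤ N) {M : ℝ}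
    (hM : kernelIter κ (j - k) {x | M < dS x origin} ≤ ε ^ (j - k) * (ε / 2)) :
    ENNReal.ofReal (dS origin (xh j) - M) ^ 2 * (ε ^ (j - k) * (ε / 2))
      ≤ ENNReal.ofReal (c' k) := by
  have hq' : ∀ l, k ≤ l → l < j → ε ≤ qq κ f k l := fun l hkl hlj => hq l hkl hlj.le
  have := isProbabilityMeasure_mupred hκ hP.1
    (fun l hkl hlj => (hε.bot_lt.trans_le (hq' l hkl hlj)).ne') hkj (by omega)
  have hεt : ε ≠ ⊤ :=
    ((hq j hkj le_rfl).trans_lt ((qq_le_one (hP.1 j hkj hjN).2).trans_lt ENNReal.one_lt_top)).ne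
  have hpow0 : ε ^ (j - k) ≠ 0 := pow_ne_zero _ hε
  have hpowt : ε ^ (j - k) ≠ ⊤ := ENNReal.pow_ne_top hεt
  set B := {x | dS x origin ≤ M}
  have hB : MeasurableSet B := measurable_dS origin measurableSet_Iic
  have hBc : mupred κ f k j Bᶜ ≤ ε / 2 := by
    have hdom := Measure.le_iff.1 (pow_smul_mupred_le_kernelIter hκ hP.1 hε hq' hkj (by omega))
      Bᶜ hB.compl
    rw [Measure.smul_apply, smul_eq_mul] at hdom
    refine (ENNReal.mul_le_mul_iff_right hpow0 hpowt).1 (hdom.trans ?_)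
    rwa [show Bᶜ = {x | M < dS x origin} by ext; simp [B]]
  have hr : ∀ x ∈ B,
      ENNReal.ofReal (dS origin (xh j) - M) ^ 2 ≤ ENNReal.ofReal (dS x (xh j) ^ 2) := by
    intro x hx
    rw [ENNReal.ofReal_pow (p := dS x (xh j)) (Real.sqrt_nonneg _)]
    gcongr
    exact sub_le_dS_of_dS_le hx
  calc ENNReal.ofReal (dS origin (xh j) - M) ^ 2 * (ε ^ (j - k) * (ε / 2))
      = ε ^ (j - k) * (ENNReal.ofReal (dS origin (xh j) - M) ^ 2 * (ε / 2)) := by ring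
    _ ≤ ε ^ (j - k) * ∫⁻ x, f j x * ENNReal.ofReal (dS x (xh j) ^ 2) ∂(mupred κ f k j) := by
        gcongr
        exact mul_half_le_lintegral_mul hB (hP.1 j hkj hjN).2 (hq j hkj le_rfl) hεt hBc hr
    _ ≤ ε ^ (j - k) * ∫⁻ x, VV κ c' N xh f j x ∂(mupred κ f k j) := by
        gcongr with x; exact mul_dS_sq_le_VV hjN x
    _ ≤ Cost κ c' k N xh f := pow_mul_lintegral_VV_le_cost hκ hP.1 hε hq' hkj hjN
    _ ≤ ENNReal.ofReal (c' k) := cost_le_of_inP hκ (hkj.trans hjN) hP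

/-- `fseq i` plays the role of `f^(i+1)` and `xhat i` that of `x̂^(i)`. -/
theorem estimates_bounded_general (κ : S → Measure S) (hκ : IsMarkov κ)
    (k N : ℕ) (c' : ℕ → ℝ)
    (j₀ : ℕ) (hj₀N : j₀ ≤ N)
    (xhat : ℕ → ℕ → S) (fseq : ℕ → ℕ → S → ℝ≥0∞)
    (hP : ∀ i, inP κ c' k N (xhat i) (fseq i))
    (ε : ℝ≥0∞) (hε : 0 < ε)
    (hq : ∀ i j, k ≤ j → j ≤ j₀ → ε ≤ qq κ (fseq i) k j) :
    ∀ j, k ≤ j → j ≤ j₀ → ∃ R : ℝ, ∀ i, dS origin (xhat i j) ≤ R := by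
  intro j hkj hjj₀
  set δ := ε ^ (j - k) * (ε / 2)
  have hδ : δ ≠ 0 := mul_ne_zero (pow_ne_zero _ hε.ne') (ENNReal.half_pos hε.ne').ne'
  have := isProbabilityMeasure_kernelIter hκ (j - k)
  obtain ⟨M, hM⟩ :=
    exists_measure_setOf_lt_lt (kernelIter κ (j - k)) (measurable_dS origin) hδ.bot_lt
  refine ⟨M + √(ENNReal.ofReal (c' k) / δ).toReal, fun i => ?_⟩
  have hbound := ofReal_dS_sub_sq_mul_le hκ (hP i) hε.ne'
    (fun l hkl hlj => hq i l hkl (hlj.trans hjj₀)) hkj (hjj₀.trans hj₀N) hM.le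
  linarith [le_sqrt_of_ofReal_sq_mul_le hδ ENNReal.ofReal_ne_top hbound]

/-- If `f^(i) ∈ 𝔓(x̂^(i−1))` for all `i` and the quantities `q_j^(i)` are uniformly
bounded below by `ε > 0` for `j ∈ {k, …, j₀}`, then for each such `j` the set of
estimates `{x̂_j^(i)}` is `d`-bounded. (Here `fseq i` plays the role of `f^(i+1)`
and `xhat i` that of `x̂^(i)`.) -/
theorem estimates_bounded (κ : S → Measure S) (hκ : IsMarkov κ)
    (hA : Assumption1 κ)
    (k N : ℕ) (hkN : k ≤ N) (c' : ℕ → ℝ) (hc' : ∀ j, k ≤ j → j ≤ N → 0 < c' j)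
    (j₀ : ℕ) (hkj₀ : k ≤ j₀) (hj₀N : j₀ ≤ N)
    (xhat : ℕ → ℕ → S) (fseq : ℕ → ℕ → S → ℝ≥0∞)
    (hP : ∀ i, inP κ c' k N (xhat i) (fseq i))
    (ε : ℝ≥0∞) (hε : 0 < ε)
    (hq : ∀ i j, k ≤ j → j ≤ j₀ → ε ≤ qq κ (fseq i) k j) :
    ∀ j, k ≤ j → j ≤ j₀ → ∃ R : ℝ, ∀ i, dS origin (xhat i j) ≤ R :=
  estimates_bounded_general κ hκ k N c' j₀ hj₀N xhat fseq hP ε hε hq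

end
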